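/- In a geodesic δ-hyperbolic space, let abc be a geodesic triangle and d ≥ 0. Then the set S of points x on side ab satisfying d(x, bc) ≤ d and d(x, ac) ≤ d has diameter at most C(d + δ) for some universal constant C (one may take C = 48; concretely, any two points x, y ∈ S satisfy |x - y| ≤ 24δ + d + (distance between projections) ≤ C(d+δ)). -/

import Mathlib

open Metric Set

/-- `s` is a geodesic segment from `x` to `y`. -/
def IsGeodSeg {X : Type*} [MetricSpace X] (x y : X) (s : Set X) : Prop :=
  ∃ f : ℝ → X, f 0 = x ∧ f (dist x y) = y ∧
    (∀ a ∈ Icc (0:ℝ) (dist x y), ∀ b ∈ Icc (0:ℝ) (dist x y), dist (f a) (f b) = |a - b|) ∧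
    s = f '' Icc (0:ℝ) (dist x y)

/-- A geodesic metric space: any two points are joined by a geodesic segment. -/
def GeodesicSpace (X : Type*) [MetricSpace X] : Prop :=
  ∀ x y : X, ∃ s : Set X, IsGeodSeg x y s

/-- δ-hyperbolicity via δ-thin geodesic triangles. -/
def ThinTriangles (X : Type*) [MetricSpace X] (δ : ℝ) : Prop :=
  ∀ (x y z : X) (sxy syz sxz : Set X),
    IsGeodSeg x y sxy → IsGeodSeg y z syz → IsGeodSeg x z sxz →
    ∀ p ∈ sxy, infDist p (syz ∪ sxz) ≤ δ

/-!
A point `p` of `[a, b]` within `d` of a point of `[b, c]` and of a point of `[a, c]` satisfies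
`|dist a p - (b|c)_a| ≤ d` by the triangle inequality alone, where `(b|c)_a` is the Gromov product.
Two such points of `[a, b]` are therefore within `2 d` of each other.
-/

namespace IsGeodSeg

variable {X : Type*} [MetricSpace X] {x y p q : X} {s : Set X}

theorem left_mem (h : IsGeodSeg x y s) : x ∈ s := by
  obtain ⟨f, hf0, -, -, rfl⟩ := h
  exact ⟨0, ⟨le_rfl, dist_nonneg⟩, hf0⟩

theorem right_mem (h : IsGeodSeg x y s) : y ∈ s := by
  obtain ⟨f, -, hfy, -, rfl⟩ := h
  exact ⟨dist x y, ⟨dist_nonneg, le_rfl⟩, hfy⟩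

theorem isCompact (h : IsGeodSeg x y s) : IsCompact s := by
  obtain ⟨f, -, -, hiso, rfl⟩ := h
  have hlip : LipschitzOnWith 1 f (Icc 0 (dist x y)) := by
    intro u hu v hv
    simp [edist_dist, hiso u hu v hv, Real.dist_eq]
  exact isCompact_Icc.image_of_continuousOn hlip.continuousOn

theorem dist_eq_abs_sub_dist (h : IsGeodSeg x y s) (hp : p ∈ s) (hq : q ∈ s) :
    dist p q = |dist x p - dist x q| := by
  obtain ⟨f, rfl, -, hiso, rfl⟩ := h
  obtain ⟨r, hr, rfl⟩ := hp
  obtain ⟨t, ht, rfl⟩ := hq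
  have h0 : (0 : ℝ) ∈ Icc 0 (dist (f 0) y) := ⟨le_rfl, dist_nonneg⟩
  rw [hiso r hr t ht, hiso 0 h0 r hr, hiso 0 h0 t ht, zero_sub, zero_sub, abs_neg, abs_neg,
    abs_of_nonneg hr.1, abs_of_nonneg ht.1]

theorem dist_left_le (h : IsGeodSeg x y s) (hp : p ∈ s) : dist x p ≤ dist x y := by
  obtain ⟨f, hf0, -, hiso, rfl⟩ := h
  obtain ⟨r, hr, rfl⟩ := hp
  rw [← hf0, hiso 0 ⟨le_rfl, dist_nonneg⟩ r hr, zero_sub, abs_neg, abs_of_nonneg hr.1, hf0]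
  exact hr.2

theorem dist_add_dist (h : IsGeodSeg x y s) (hp : p ∈ s) : dist x p + dist p y = dist x y := by
  rw [h.dist_eq_abs_sub_dist hp h.right_mem, abs_of_nonpos (sub_nonpos.2 (h.dist_left_le hp))]
  ring

end IsGeodSeg

section GromovProduct

variable {X : Type*} [MetricSpace X]

/-- The Gromov product `(x|y)_w` based at `w`. -/
noncomputable def gromovProduct (w x y : X) : ℝ := (dist w x + dist w y - dist x y) / 2

theorem abs_dist_sub_gromovProduct_le {a b c p u v : X} {d : ℝ}
    (hp : dist a p + dist p b = dist a b) (hu : dist b u + dist u c = dist b c)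
    (hv : dist a v + dist v c = dist a c) (hpu : dist p u ≤ d) (hpv : dist p v ≤ d) :
    |dist a p - gromovProduct a b c| ≤ d := by
  have hacu := dist_triangle4 a p u c
  have hpub := dist_triangle p u b
  have hbcv := dist_triangle4 b p v c
  have hapv := dist_triangle a v p
  rw [dist_comm u b] at hpub
  rw [dist_comm b p] at hbcv
  rw [dist_comm v p] at hapv
  rw [gromovProduct, abs_le]
  constructor <;> linarith

theorem abs_dist_sub_gromovProduct_le_of_infDist_le {a b c p : X} {sab sbc sac : Set X} {d : ℝ}
    (hab : IsGeodSeg a b sab) (hbc : IsGeodSeg b c sbc) (hac : IsGeodSeg a c sac)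
    (hp : p ∈ sab) (hpbc : infDist p sbc ≤ d) (hpac : infDist p sac ≤ d) :
    |dist a p - gromovProduct a b c| ≤ d := by
  obtain ⟨u, hu, hpu⟩ := hbc.isCompact.exists_infDist_eq_dist ⟨b, hbc.left_mem⟩ p
  obtain ⟨v, hv, hpv⟩ := hac.isCompact.exists_infDist_eq_dist ⟨a, hac.left_mem⟩ p
  exact abs_dist_sub_gromovProduct_le (hab.dist_add_dist hp) (hbc.dist_add_dist hu)
    (hac.dist_add_dist hv) (hpu ▸ hpbc) (hpv ▸ hpac)

end GromovProduct

theorem lemma6_diameter_of_close_set_general {X : Type*} [MetricSpace X] (δ : ℝ) (hδ : 0 ≤ δ)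
    (a b c : X) (sab sbc sac : Set X) (d : ℝ) (hd : 0 ≤ d)
    (hab : IsGeodSeg a b sab) (hbc : IsGeodSeg b c sbc) (hac : IsGeodSeg a c sac) :
    ∀ p ∈ sab, ∀ q ∈ sab,
      infDist p sbc ≤ d → infDist p sac ≤ d →
      infDist q sbc ≤ d → infDist q sac ≤ d →
      dist p q ≤ 48 * (d + δ) := by
  intro p hp q hq hpbc hpac hqbc hqac
  have hpg := abs_dist_sub_gromovProduct_le_of_infDist_le hab hbc hac hp hpbc hpac
  have hqg := abs_dist_sub_gromovProduct_le_of_infDist_le hab hbc hac hq hqbc hqac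
  rw [abs_sub_comm] at hqg
  calc dist p q = |dist a p - dist a q| := hab.dist_eq_abs_sub_dist hp hq
    _ ≤ |dist a p - gromovProduct a b c| + |gromovProduct a b c - dist a q| := abs_sub_le ..
    _ ≤ 48 * (d + δ) := by linarith

theorem lemma6_diameter_of_close_set {X : Type*} [MetricSpace X] (δ : ℝ) (hδ : 0 ≤ δ)
    (hgeo : GeodesicSpace X) (hthin : ThinTriangles X δ)
    (a b c : X) (sab sbc sac : Set X) (d : ℝ) (hd : 0 ≤ d)
    (hab : IsGeodSeg a b sab) (hbc : IsGeodSeg b c sbc) (hac : IsGeodSeg a c sac) :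
    ∀ p ∈ sab, ∀ q ∈ sab,
      infDist p sbc ≤ d → infDist p sac ≤ d →
      infDist q sbc ≤ d → infDist q sac ≤ d →
      dist p q ≤ 48 * (d + δ) :=
  lemma6_diameter_of_close_set_general δ hδ a b c sab sbc sac d hd hab hbc hac
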